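/- arXiv:1405.1436 — 2 statements merged into one kernel-verified Lean document; each statement's English description precedes it below -/
import Mathlib

section
/- Let X be a finite nonempty set and E : X → ℝ an energy function. If ε(x) for x ∈ X are i.i.d. samples from the standard Gumbel distribution with density γ(t) = exp(-t - exp(-t)), then for any x̂ ∈ X, the probability that x̂ is the unique maximizer of -E(x) + ε(x) equals exp(-E(x̂)) / Σ_{y ∈ X} exp(-E(y)). -/
/-!
Write `G = ε xhat`. Given `G = t`, independence makes the event the intersection of the
independent events `ε y < t + E y - E xhat` for `y ≠ xhat`, of total probability
`∏ exp (-exp (-t) * exp (E xhat - E y)) = exp (-K exp (-t))` with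
`K = ∑_{y ≠ xhat} exp (E xhat - E y)`. Integrating against the Gumbel density,
`∫ exp (-t - (1 + K) exp (-t)) dt = (1 + K)⁻¹`, which is the Gibbs weight of `xhat`.
-/

open MeasureTheory ProbabilityTheory Real Set Filter Topology

section

variable {ι : Type*} [Fintype ι]

theorem measurableSet_setOf_forall_ne_lt_add (i : ι) (b : ι → ℝ) :
    MeasurableSet {f : ι → ℝ | ∀ j ≠ i, f j < f i + b j} := by
  simp only [ofPred_forall]
  exact .iInter fun j => .iInter fun _ =>
    measurableSet_lt (measurable_pi_apply j) ((measurable_pi_apply i).add_const _)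

theorem pi_setOf_forall_ne_lt_add [DecidableEq ι] (μ : ι → Measure ℝ)
    [∀ j, SigmaFinite (μ j)] (i : ι) (b : ι → ℝ) :
    Measure.pi μ {f | ∀ j ≠ i, f j < f i + b j}
      = ∫⁻ t, ∏ j : {j // j ≠ i}, μ j (Iio (t + b j)) ∂μ i := by
  set S := {f : ι → ℝ | ∀ j ≠ i, f j < f i + b j}
  have hsplit := measurePreserving_piEquivPiSubtypeProd μ (· = i)
  set e := MeasurableEquiv.piEquivPiSubtypeProd (fun _ : ι => ℝ) (· = i)
  have hS : MeasurableSet (e.symm ⁻¹' S) :=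
    e.symm.measurable (measurableSet_setOf_forall_ne_lt_add i b)
  have hsection : ∀ g : {j // j = i} → ℝ, Prod.mk g ⁻¹' (e.symm ⁻¹' S)
      = Set.pi univ fun j : {j // j ≠ i} => Iio (g ⟨i, rfl⟩ + b j) := by
    intro g
    ext h
    simp +contextual [S, e, MeasurableEquiv.piEquivPiSubtypeProd,
      Equiv.piEquivPiSubtypeProd_symm_apply]
  rw [← hsplit.symm.measure_preimage_equiv, Measure.prod_apply hS]
  simp_rw [hsection, Measure.pi_pi]
  convert (measurePreserving_piUnique fun j : {j // j = i} => μ j).lintegral_comp_emb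
    (MeasurableEquiv.measurableEmbedding _) (fun t => ∏ j : {j // j ≠ i}, μ j (Iio (t + b j)))
    using 3 <;> rfl

end

theorem hasDerivAt_inv_mul_exp_neg_mul_exp_neg {c : ℝ} (hc : c ≠ 0) (t : ℝ) :
    HasDerivAt (fun t => c⁻¹ * exp (-(c * exp (-t)))) (exp (-t - c * exp (-t))) t := by
  refine ((((((hasDerivAt_id t).neg).exp).const_mul c).neg).exp.const_mul c⁻¹).congr_deriv ?_
  simp only [Pi.neg_apply, id_eq]
  rw [sub_eq_add_neg, exp_add]
  field_simp

theorem exp_neg_sub_mul_exp_neg_le {c : ℝ} (hc : 0 < c) (t : ℝ) :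
    exp (-t - c * exp (-t)) ≤ 2 / c ^ 2 * exp t := by
  have hs := exp_pos (-t)
  have hquad : (c * exp (-t)) ^ 2 / 2 ≤ exp (c * exp (-t)) := by
    nlinarith [quadratic_le_exp_of_nonneg (mul_pos hc hs).le, mul_pos hc hs]
  calc exp (-t - c * exp (-t)) = exp (-t) / exp (c * exp (-t)) := by rw [exp_sub]
    _ ≤ exp (-t) / ((c * exp (-t)) ^ 2 / 2) := by gcongr
    _ = 2 / c ^ 2 * exp t := by rw [exp_neg t]; field_simp

theorem integrable_exp_neg_sub_mul_exp_neg {c : ℝ} (hc : 0 < c) :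
    Integrable fun t => exp (-t - c * exp (-t)) := by
  have hmeas : AEStronglyMeasurable (fun t => exp (-t - c * exp (-t))) :=
    (by fun_prop : Continuous fun t => exp (-t - c * exp (-t))).aestronglyMeasurable
  rw [← integrableOn_univ, ← Iic_union_Ioi (a := 0)]
  refine .union ?_ ?_
  · refine ((integrableOn_exp_Iic 0).const_mul (2 / c ^ 2)).mono' hmeas.restrict
      (ae_of_all _ fun t => ?_)
    rw [norm_of_nonneg (exp_pos _).le]
    exact exp_neg_sub_mul_exp_neg_le hc t
  · refine (exp_neg_integrableOn_Ioi 0 one_pos).mono' hmeas.restrict (ae_of_all _ fun t => ?_)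
    rw [norm_of_nonneg (exp_pos _).le, exp_le_exp]
    nlinarith [exp_pos (-t)]

theorem tendsto_inv_mul_exp_neg_mul_exp_neg_atBot {c : ℝ} (hc : 0 < c) :
    Tendsto (fun t => c⁻¹ * exp (-(c * exp (-t)))) atBot (𝓝 0) := by
  simpa using (tendsto_exp_atBot.comp <| tendsto_neg_atTop_atBot.comp <|
    (tendsto_exp_atTop.comp tendsto_neg_atBot_atTop).const_mul_atTop hc).const_mul c⁻¹

theorem tendsto_inv_mul_exp_neg_mul_exp_neg_atTop (c : ℝ) :
    Tendsto (fun t => c⁻¹ * exp (-(c * exp (-t)))) atTop (𝓝 c⁻¹) := by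
  have h : Tendsto (fun t => -(c * exp (-t))) atTop (𝓝 0) := by
    simpa using ((tendsto_exp_atBot.comp tendsto_neg_atTop_atBot).const_mul c).neg
  simpa using ((continuous_exp.tendsto 0).comp h).const_mul c⁻¹

theorem lintegral_Iic_exp_neg_sub_mul_exp_neg {c : ℝ} (hc : 0 < c) (a : ℝ) :
    ∫⁻ t in Iic a, ENNReal.ofReal (exp (-t - c * exp (-t)))
      = ENNReal.ofReal (c⁻¹ * exp (-(c * exp (-a)))) := by
  rw [← ofReal_integral_eq_lintegral_ofReal (integrable_exp_neg_sub_mul_exp_neg hc).integrableOn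
    (ae_of_all _ fun t => (exp_pos _).le), integral_Iic_of_hasDerivAt_of_tendsto'
    (fun t _ => hasDerivAt_inv_mul_exp_neg_mul_exp_neg hc.ne' t)
    (integrable_exp_neg_sub_mul_exp_neg hc).integrableOn
    (tendsto_inv_mul_exp_neg_mul_exp_neg_atBot hc), sub_zero]

theorem lintegral_exp_neg_sub_mul_exp_neg {c : ℝ} (hc : 0 < c) :
    ∫⁻ t, ENNReal.ofReal (exp (-t - c * exp (-t))) = ENNReal.ofReal c⁻¹ := by
  rw [← ofReal_integral_eq_lintegral_ofReal (integrable_exp_neg_sub_mul_exp_neg hc)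
    (ae_of_all _ fun t => (exp_pos _).le), integral_of_hasDerivAt_of_tendsto
    (hasDerivAt_inv_mul_exp_neg_mul_exp_neg hc.ne') (integrable_exp_neg_sub_mul_exp_neg hc)
    (tendsto_inv_mul_exp_neg_mul_exp_neg_atBot hc)
    (tendsto_inv_mul_exp_neg_mul_exp_neg_atTop c), sub_zero]

noncomputable def gumbelMeasure : Measure ℝ :=
  volume.withDensity fun t => ENNReal.ofReal (exp (-t - exp (-t)))

theorem gumbelMeasure_Iic (a : ℝ) :
    gumbelMeasure (Iic a) = ENNReal.ofReal (exp (-exp (-a))) := by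
  rw [gumbelMeasure, withDensity_apply _ measurableSet_Iic]
  simpa using lintegral_Iic_exp_neg_sub_mul_exp_neg one_pos a

theorem gumbelMeasure_Iio (a : ℝ) :
    gumbelMeasure (Iio a) = ENNReal.ofReal (exp (-exp (-a))) := by
  rw [← gumbelMeasure_Iic]
  exact measure_congr ((withDensity_absolutelyContinuous _ _).ae_eq Iio_ae_eq_Iic)

instance : IsProbabilityMeasure gumbelMeasure := by
  constructor
  rw [gumbelMeasure, withDensity_apply _ .univ, Measure.restrict_univ]
  simpa using lintegral_exp_neg_sub_mul_exp_neg one_pos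

theorem eq_gumbelMeasure_of_cdf {ν : Measure ℝ} [IsProbabilityMeasure ν]
    (h : ∀ t, ν (Iic t) = ENNReal.ofReal (exp (-exp (-t)))) : ν = gumbelMeasure :=
  Measure.ext_of_Iic _ _ fun t => by rw [h, gumbelMeasure_Iic]

-- Max-stability: the maximum of independent shifted Gumbel variables is again a shifted Gumbel.
theorem prod_gumbelMeasure_Iio_add {ι : Type*} [Fintype ι] (b : ι → ℝ) (t : ℝ) :
    ∏ j, gumbelMeasure (Iio (t + b j))
      = ENNReal.ofReal (exp (-((∑ j, exp (-b j)) * exp (-t)))) := by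
  simp_rw [gumbelMeasure_Iio, ← ENNReal.ofReal_prod_of_nonneg fun j _ => (exp_pos _).le,
    ← exp_sum, Finset.sum_mul, ← exp_add, ← Finset.sum_neg_distrib, neg_add, add_comm]

-- `exp (-G)` is standard exponential for `G` Gumbel; this is its Laplace transform at `K`.
theorem lintegral_exp_neg_mul_exp_neg_gumbelMeasure {K : ℝ} (hK : 0 ≤ K) :
    ∫⁻ t, ENNReal.ofReal (exp (-(K * exp (-t)))) ∂gumbelMeasure
      = ENNReal.ofReal (1 + K)⁻¹ := by
  rw [gumbelMeasure, lintegral_withDensity_eq_lintegral_mul₀ (by fun_prop) (by fun_prop),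
    ← lintegral_exp_neg_sub_mul_exp_neg (by linarith : 0 < 1 + K)]
  refine lintegral_congr fun t => ?_
  rw [Pi.mul_apply, ← ENNReal.ofReal_mul (exp_pos _).le, ← exp_add]
  ring_nf

theorem gumbel_max_trick_general {X Ω : Type*} [Fintype X]
    [MeasurableSpace Ω] (μ : Measure Ω) [IsProbabilityMeasure μ]
    (E : X → ℝ) (ε : X → Ω → ℝ) (hmeas : ∀ x, Measurable (ε x))
    (hindep : iIndepFun ε μ)
    (hgumbel : ∀ x t, μ {ω | ε x ω ≤ t} = ENNReal.ofReal (Real.exp (-Real.exp (-t))))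
    (xhat : X) :
    μ {ω | ∀ y, y ≠ xhat → -E y + ε y ω < -E xhat + ε xhat ω}
      = ENNReal.ofReal (Real.exp (-E xhat) / ∑ y, Real.exp (-E y)) := by
  classical
  have hlaw : μ.map (fun ω x => ε x ω) = Measure.pi fun _ => gumbelMeasure := by
    rw [hindep.map_fun_eq_pi_map fun x => (hmeas x).aemeasurable]
    congr with x : 1
    have := Measure.isProbabilityMeasure_map (μ := μ) (hmeas x).aemeasurable
    exact eq_gumbelMeasure_of_cdf fun t => by
      rw [Measure.map_apply (hmeas x) measurableSet_Iic]; exact hgumbel x t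
  have hevent : {ω | ∀ y, y ≠ xhat → -E y + ε y ω < -E xhat + ε xhat ω}
      = (fun ω x => ε x ω) ⁻¹' {f | ∀ y ≠ xhat, f y < f xhat + (E y - E xhat)} := by
    ext ω
    refine forall₂_congr fun y _ => ?_
    constructor <;> intro h <;> linarith
  set K := ∑ y : {y // y ≠ xhat}, exp (-(E y - E xhat))
  have hsum : ∑ y, exp (-E y) = exp (-E xhat) * (1 + K) := by
    rw [Fintype.sum_eq_add_sum_subtype_ne _ xhat, mul_add, mul_one, Finset.mul_sum]
    simp_rw [← exp_add]
    ring_nf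
  rw [hevent, ← Measure.map_apply (measurable_pi_lambda _ hmeas)
    (measurableSet_setOf_forall_ne_lt_add _ _), hlaw, pi_setOf_forall_ne_lt_add]
  simp_rw [prod_gumbelMeasure_Iio_add]
  rw [lintegral_exp_neg_mul_exp_neg_gumbelMeasure (by positivity), hsum,
    div_mul_cancel_left₀ (exp_pos _).ne']

/-- **Gumbel max trick** (Gumbel 1954): for i.i.d. standard Gumbel perturbations
`ε x` of the negative energies `-E x` on a finite nonempty set `X`, the probability
that `xhat` is the (unique) maximizer of `-E x + ε x` is the Gibbs probability
`exp (-E xhat) / ∑ y, exp (-E y)`. -/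
theorem gumbel_max_trick {X Ω : Type*} [Fintype X] [Nonempty X]
    [MeasurableSpace Ω] (μ : Measure Ω) [IsProbabilityMeasure μ]
    (E : X → ℝ) (ε : X → Ω → ℝ) (hmeas : ∀ x, Measurable (ε x))
    (hindep : iIndepFun ε μ)
    (hgumbel : ∀ x t, μ {ω | ε x ω ≤ t} = ENNReal.ofReal (Real.exp (-Real.exp (-t))))
    (xhat : X) :
    μ {ω | ∀ y, y ≠ xhat → -E y + ε y ω < -E xhat + ε xhat ω}
      = ENNReal.ofReal (Real.exp (-E xhat) / ∑ y, Real.exp (-E y)) :=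
  gumbel_max_trick_general μ E ε hmeas hindep hgumbel xhat
end

section
/- For independent standard Gumbel variables ε(x), x ∈ X (X finite), and energies E : X → ℝ, the random variable argmax_x(-E(x) + ε(x)) and the random value max_x(-E(x) + ε(x)) are independent. -/
/-!
With weights `w x = exp (-E x)`, the perturbed value `-E x + ε x` has CDF `exp (-w x * exp (-t))`,
and these CDFs multiply by adding weights. Integrating over the value `u ≤ t` of the `xhat`
coordinate, the event "`xhat` is the strict argmax and the max is `≤ t`" has probability
`∫_{u ≤ t} exp (-(W - w xhat) e⁻ᵘ) dF_xhat(u) = (w xhat / W) · exp (-W e⁻ᵗ)` with `W = ∑ w x`,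
i.e. `w xhat / W` times the probability that the max is `≤ t`. As the half-lines `Iic t`
determine a finite measure on `ℝ`, the law of the max restricted to the argmax event is then
`w xhat / W` times the law of the max, which is the independence.
-/

open MeasureTheory ProbabilityTheory Real Set Filter Topology

lemma Finset.sup'_le_iff_of_forall_lt {ι α : Type*} [LinearOrder α] {s : Finset ι}
    (H : s.Nonempty) {g : ι → α} {i : ι} (hi : i ∈ s) (hg : ∀ j ∈ s, j ≠ i → g j < g i) (t : α) :
    s.sup' H g ≤ t ↔ g i ≤ t := by
  rw [Finset.sup'_le_iff]
  refine ⟨fun h => h i hi, fun h j hj => ?_⟩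
  rcases eq_or_ne j i with rfl | hji
  · exact h
  · exact (hg j hj hji).le.trans h

namespace ProbabilityTheory

/-- `w` is a weight: this is the Gumbel law with location `log w`, standard for `w = 1`. -/
noncomputable def gumbelCDF (w t : ℝ) : ℝ := exp (-w * exp (-t))

noncomputable def gumbelPDF (w u : ℝ) : ℝ := w * exp (-u - w * exp (-u))

lemma gumbelCDF_pos (w t : ℝ) : 0 < gumbelCDF w t := exp_pos _

lemma gumbelCDF_sum {ι : Type*} (s : Finset ι) (w : ι → ℝ) (t : ℝ) :
    gumbelCDF (∑ i ∈ s, w i) t = ∏ i ∈ s, gumbelCDF (w i) t := by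
  simp only [gumbelCDF, ← exp_sum, neg_mul, Finset.sum_mul, Finset.sum_neg_distrib]

lemma hasDerivAt_gumbelCDF (w t : ℝ) : HasDerivAt (gumbelCDF w) (gumbelPDF w t) t := by
  have := (((hasDerivAt_neg t).exp).const_mul (-w)).exp
  show HasDerivAt (fun u => exp (-w * exp (-u))) _ t
  convert this using 1
  rw [gumbelPDF, sub_eq_add_neg, exp_add, ← neg_mul]
  ring

lemma tendsto_gumbelCDF_atBot {w : ℝ} (hw : 0 < w) : Tendsto (gumbelCDF w) atBot (𝓝 0) := by
  have h : Tendsto (fun t => w * exp (-t)) atBot atTop :=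
    (tendsto_exp_atTop.comp tendsto_neg_atBot_atTop).const_mul_atTop hw
  exact (tendsto_exp_atBot.comp (tendsto_neg_atTop_atBot.comp h)).congr fun t => by
    simp [gumbelCDF]

lemma integrableOn_Iic_gumbelPDF {w : ℝ} (hw : 0 < w) (t : ℝ) :
    IntegrableOn (gumbelPDF w) (Iic t) := by
  -- Reflected to `Ioi`, where a nonnegative derivative with a limit at `∞` is integrable.
  have hderiv : ∀ x ∈ Ici (-t), HasDerivAt (fun x => -gumbelCDF w (-x)) (gumbelPDF w (-x)) x :=
    fun x _ => by
      simpa [Function.comp_def] using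
        ((hasDerivAt_gumbelCDF w (-x)).comp x (hasDerivAt_neg x)).fun_neg
  have hlim : Tendsto (fun x => -gumbelCDF w (-x)) atTop (𝓝 (-0)) :=
    ((tendsto_gumbelCDF_atBot hw).comp tendsto_neg_atTop_atBot).neg
  have hIoi := integrableOn_Ioi_deriv_of_nonneg' hderiv
    (fun x _ => by unfold gumbelPDF; positivity) hlim
  have hIci : IntegrableOn (fun x => gumbelPDF w (-x)) (Ici (-t)) :=
    (integrableOn_Ici_iff_integrableOn_Ioi).mpr hIoi
  simpa using hIci.comp_neg_Iic

lemma lintegral_Iic_gumbelPDF {w : ℝ} (hw : 0 < w) (t : ℝ) :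
    ∫⁻ u in Iic t, ENNReal.ofReal (gumbelPDF w u) = ENNReal.ofReal (gumbelCDF w t) := by
  rw [← ofReal_integral_eq_lintegral_ofReal (integrableOn_Iic_gumbelPDF hw t)
    (ae_of_all _ fun u => by unfold gumbelPDF; positivity),
    integral_Iic_of_hasDerivAt_of_tendsto' (fun x _ => hasDerivAt_gumbelCDF w x)
      (integrableOn_Iic_gumbelPDF hw t) (tendsto_gumbelCDF_atBot hw), sub_zero]

noncomputable def gumbelMeasure (w : ℝ) : Measure ℝ :=
  volume.withDensity fun u => ENNReal.ofReal (gumbelPDF w u)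

lemma gumbelMeasure_Iic {w : ℝ} (hw : 0 < w) (t : ℝ) :
    gumbelMeasure w (Iic t) = ENNReal.ofReal (gumbelCDF w t) := by
  rw [gumbelMeasure, withDensity_apply _ measurableSet_Iic, lintegral_Iic_gumbelPDF hw]

lemma gumbelMeasure_Iio {w : ℝ} (hw : 0 < w) (t : ℝ) :
    gumbelMeasure w (Iio t) = ENNReal.ofReal (gumbelCDF w t) := by
  rw [← gumbelMeasure_Iic hw, measure_congr (Iio_ae_eq_Iic' ?_)]
  exact withDensity_absolutelyContinuous _ _ (measure_singleton t)

lemma gumbelPDF_mul_gumbelCDF {w K : ℝ} (h : w + K ≠ 0) (u : ℝ) :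
    gumbelPDF w u * gumbelCDF K u = w / (w + K) * gumbelPDF (w + K) u := by
  rw [gumbelPDF, gumbelPDF, gumbelCDF, mul_assoc, ← exp_add, ← mul_assoc, div_mul_cancel₀ w h]
  ring_nf

lemma setLIntegral_gumbelCDF {w K : ℝ} (hw : 0 < w) (hK : 0 ≤ K) (t : ℝ) :
    ∫⁻ u in Iic t, ENNReal.ofReal (gumbelCDF K u) ∂gumbelMeasure w
      = ENNReal.ofReal (w / (w + K) * gumbelCDF (w + K) t) := by
  have hwK : 0 < w + K := by linarith
  rw [gumbelMeasure, restrict_withDensity measurableSet_Iic,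
    lintegral_withDensity_eq_lintegral_mul _ (by unfold gumbelPDF; fun_prop)
      (by unfold gumbelCDF; fun_prop)]
  simp_rw [Pi.mul_apply,
    ← ENNReal.ofReal_mul (by unfold gumbelPDF; positivity : 0 ≤ gumbelPDF w _),
    gumbelPDF_mul_gumbelCDF hwK.ne', ENNReal.ofReal_mul (by positivity : 0 ≤ w / (w + K))]
  rw [lintegral_const_mul _ (by unfold gumbelPDF; fun_prop), lintegral_Iic_gumbelPDF hwK,
    ← ENNReal.ofReal_mul (by positivity)]

lemma gumbelCDF_exp_neg (a t : ℝ) : gumbelCDF (exp (-a)) t = exp (-exp (-(t + a))) := by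
  rw [gumbelCDF, neg_mul, ← exp_add]
  ring_nf

lemma map_eq_gumbelMeasure {Ω : Type*} [MeasurableSpace Ω] {μ : Measure Ω}
    [IsFiniteMeasure μ] {f : Ω → ℝ} (hf : Measurable f) {w : ℝ} (hw : 0 < w)
    (h : ∀ t, μ (f ⁻¹' Iic t) = ENNReal.ofReal (gumbelCDF w t)) :
    μ.map f = gumbelMeasure w :=
  Measure.ext_of_Iic _ _ fun t => by
    rw [Measure.map_apply hf measurableSet_Iic, h, gumbelMeasure_Iic hw]

variable {Ω ι : Type*} [MeasurableSpace Ω] {μ : Measure Ω}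

lemma measure_inter_preimage_eq_mul_of_forall_Iic {α : Type*} [TopologicalSpace α]
    [SecondCountableTopology α] [LinearOrder α] [OrderTopology α] [MeasurableSpace α]
    [BorelSpace α] [IsProbabilityMeasure μ] {A : Set Ω} {M : Ω → α} (hM : Measurable M)
    (c : ENNReal) (h : ∀ t, μ (A ∩ M ⁻¹' Iic t) = c * μ (M ⁻¹' Iic t))
    {s : Set α} (hs : MeasurableSet s) :
    μ (A ∩ M ⁻¹' s) = μ A * μ (M ⁻¹' s) := by
  have hlaw : (μ.restrict A).map M = c • μ.map M := by
    refine Measure.ext_of_Iic _ _ fun t => ?_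
    rw [Measure.map_apply hM measurableSet_Iic, Measure.restrict_apply (hM measurableSet_Iic),
      inter_comm, h, Measure.smul_apply, Measure.map_apply hM measurableSet_Iic, smul_eq_mul]
  have hmul : ∀ s, MeasurableSet s → μ (A ∩ M ⁻¹' s) = c * μ (M ⁻¹' s) := fun s hs => by
    have := congr_arg (· s) hlaw
    simpa [Measure.map_apply hM hs, Measure.restrict_apply (hM hs), inter_comm] using this
  have hA : μ A = c := by simpa using hmul univ .univ
  rw [hmul s hs, hA]

lemma iIndepFun.measure_sup'_le [Fintype ι] [Nonempty ι] {G : ι → Ω → ℝ}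
    (hind : iIndepFun G μ) (t : ℝ) :
    μ {ω | Finset.univ.sup' Finset.univ_nonempty (fun j => G j ω) ≤ t}
      = ∏ j, μ (G j ⁻¹' Iic t) := by
  have hset : {ω | Finset.univ.sup' Finset.univ_nonempty (fun j => G j ω) ≤ t}
      = ⋂ j ∈ Finset.univ, G j ⁻¹' Iic t := by
    ext ω; simp [Finset.sup'_le_iff]
  rw [hset, hind.measure_inter_preimage_eq_mul _ fun _ _ => measurableSet_Iic]

lemma iIndepFun.measure_forall_lt_and_le [Fintype ι] [DecidableEq ι] {G : ι → Ω → ℝ}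
    (hG : ∀ i, Measurable (G i)) (hind : iIndepFun G μ) (i : ι) (t : ℝ) :
    μ {ω | (∀ j ≠ i, G j ω < G i ω) ∧ G i ω ≤ t}
      = ∫⁻ u in Iic t, ∏ j ∈ Finset.univ.erase i, μ (G j ⁻¹' Iio u) ∂μ.map (G i) := by
  set T := Finset.univ.erase i
  set R : Ω → T → ℝ := fun ω j => G j ω
  have hR : Measurable R := measurable_pi_lambda _ fun j => hG j
  have := hind.isProbabilityMeasure
  have hindep : IndepFun (G i) R μ :=
    (hind.indepFun_finset {i} T (by simp [T]) hG).comp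
      (measurable_pi_apply (⟨i, Finset.mem_singleton_self i⟩ : ({i} : Finset ι))) measurable_id
  rw [indepFun_iff_map_prod_eq_prod_map_map (hG i).aemeasurable hR.aemeasurable] at hindep
  set S : Set (ℝ × (T → ℝ)) := {p | p.1 ≤ t} ∩ ⋂ j, {p | p.2 j < p.1}
  have hS : MeasurableSet S :=
    measurableSet_le measurable_fst measurable_const |>.inter <|
      MeasurableSet.iInter fun j => measurableSet_lt (by fun_prop) measurable_fst
  have hset : {ω | (∀ j ≠ i, G j ω < G i ω) ∧ G i ω ≤ t} = (fun ω => (G i ω, R ω)) ⁻¹' S := by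
    ext ω; simp [S, R, T, and_comm]
  have hslice : ∀ u, (μ.map R) (Prod.mk u ⁻¹' S)
      = (Iic t).indicator (fun u => ∏ j ∈ T, μ (G j ⁻¹' Iio u)) u := by
    intro u
    by_cases hu : u ≤ t
    · rw [indicator_of_mem (mem_Iic.mpr hu), Measure.map_apply hR (measurable_prodMk_left hS),
        ← hind.measure_inter_preimage_eq_mul _ fun _ _ => measurableSet_Iio]
      congr 1; ext ω; simp [S, R, T, hu]
    · rw [indicator_of_notMem (mt mem_Iic.mp hu)]
      simp [S, hu]
  rw [hset, ← Measure.map_apply ((hG i).prodMk hR) hS, hindep, Measure.prod_apply hS]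
  simp_rw [hslice]
  exact lintegral_indicator measurableSet_Iic _

lemma iIndepFun.measure_forall_lt_and_le_of_gumbel [Fintype ι] [DecidableEq ι] {G : ι → Ω → ℝ}
    {w : ι → ℝ} (hG : ∀ i, Measurable (G i)) (hind : iIndepFun G μ) (hw : ∀ i, 0 < w i)
    (hlaw : ∀ i, μ.map (G i) = gumbelMeasure (w i)) (i : ι) (t : ℝ) :
    μ {ω | (∀ j ≠ i, G j ω < G i ω) ∧ G i ω ≤ t}
      = ENNReal.ofReal (w i / (∑ j, w j) * gumbelCDF (∑ j, w j) t) := by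
  have hprod : ∀ u, ∏ j ∈ Finset.univ.erase i, μ (G j ⁻¹' Iio u)
      = ENNReal.ofReal (gumbelCDF (∑ j ∈ Finset.univ.erase i, w j) u) := fun u => by
    rw [gumbelCDF_sum, ENNReal.ofReal_prod_of_nonneg fun _ _ => (gumbelCDF_pos _ _).le]
    refine Finset.prod_congr rfl fun j _ => ?_
    rw [← Measure.map_apply (hG j) measurableSet_Iio, hlaw, gumbelMeasure_Iio (hw j)]
  simp_rw [hind.measure_forall_lt_and_le hG i t, hprod, hlaw,
    setLIntegral_gumbelCDF (hw i) (Finset.sum_nonneg fun j _ => (hw j).le),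
    Finset.add_sum_erase _ _ (Finset.mem_univ i)]

lemma iIndepFun.measure_sup'_le_of_gumbel [Fintype ι] [Nonempty ι] {G : ι → Ω → ℝ}
    {w : ι → ℝ} (hG : ∀ i, Measurable (G i)) (hind : iIndepFun G μ) (hw : ∀ i, 0 < w i)
    (hlaw : ∀ i, μ.map (G i) = gumbelMeasure (w i)) (t : ℝ) :
    μ {ω | Finset.univ.sup' Finset.univ_nonempty (fun j => G j ω) ≤ t}
      = ENNReal.ofReal (gumbelCDF (∑ j, w j) t) := by
  rw [hind.measure_sup'_le, gumbelCDF_sum,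
    ENNReal.ofReal_prod_of_nonneg fun _ _ => (gumbelCDF_pos _ _).le]
  refine Finset.prod_congr rfl fun j _ => ?_
  rw [← Measure.map_apply (hG j) measurableSet_Iic, hlaw, gumbelMeasure_Iic (hw j)]

theorem iIndepFun.measure_argmax_inter_sup'_mem_eq_mul_of_gumbel [Fintype ι] [Nonempty ι]
    {G : ι → Ω → ℝ} {w : ι → ℝ} (hG : ∀ i, Measurable (G i)) (hind : iIndepFun G μ)
    (hw : ∀ i, 0 < w i) (hlaw : ∀ i, μ.map (G i) = gumbelMeasure (w i)) (i : ι) {s : Set ℝ}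
    (hs : MeasurableSet s) :
    μ ({ω | ∀ j, j ≠ i → G j ω < G i ω}
        ∩ {ω | Finset.univ.sup' Finset.univ_nonempty (fun j => G j ω) ∈ s})
      = μ {ω | ∀ j, j ≠ i → G j ω < G i ω}
        * μ {ω | Finset.univ.sup' Finset.univ_nonempty (fun j => G j ω) ∈ s} := by
  classical
  have := hind.isProbabilityMeasure
  have hM : Measurable fun ω => Finset.univ.sup' Finset.univ_nonempty (fun j => G j ω) := by
    convert Finset.measurable_sup' Finset.univ_nonempty fun j _ => hG j using 1
    ext ω; exact (Finset.sup'_apply _ _ ω).symm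
  refine measure_inter_preimage_eq_mul_of_forall_Iic hM (ENNReal.ofReal (w i / ∑ j, w j))
    (fun t => ?_) hs
  have hset : {ω | ∀ j, j ≠ i → G j ω < G i ω}
        ∩ (fun ω => Finset.univ.sup' Finset.univ_nonempty (fun j => G j ω)) ⁻¹' Iic t
      = {ω | (∀ j ≠ i, G j ω < G i ω) ∧ G i ω ≤ t} := by
    ext ω
    simp only [mem_inter_iff, mem_ofPred_eq, mem_preimage, mem_Iic]
    exact and_congr_right fun h => Finset.sup'_le_iff_of_forall_lt _ (Finset.mem_univ i)
      (fun j _ hj => h j hj) t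
  rw [hset, hind.measure_forall_lt_and_le_of_gumbel hG hw hlaw, ENNReal.ofReal_mul
    (div_nonneg (hw i).le (Finset.sum_nonneg fun j _ => (hw j).le)),
    ← hind.measure_sup'_le_of_gumbel hG hw hlaw]
  rfl

end ProbabilityTheory

/-- Independence of the max and the argmax under i.i.d. standard Gumbel perturbations:
for every candidate argmax `xhat` and every measurable set `s` of values, the event
that `xhat` is the (unique) maximizer of `-E x + ε x` and the event that the maximal
value lies in `s` are independent. -/
theorem gumbel_max_argmax_independent {X Ω : Type*} [Fintype X] [Nonempty X]
    [MeasurableSpace Ω] (μ : Measure Ω) [IsProbabilityMeasure μ]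
    (E : X → ℝ) (ε : X → Ω → ℝ) (hmeas : ∀ x, Measurable (ε x))
    (hindep : iIndepFun ε μ)
    (hgumbel : ∀ x t, μ {ω | ε x ω ≤ t} = ENNReal.ofReal (Real.exp (-Real.exp (-t)))) :
    ∀ (xhat : X) (s : Set ℝ), MeasurableSet s →
      μ ({ω | ∀ y, y ≠ xhat → -E y + ε y ω < -E xhat + ε xhat ω}
          ∩ {ω | (Finset.univ.sup' Finset.univ_nonempty fun x : X => -E x + ε x ω) ∈ s})
        = μ {ω | ∀ y, y ≠ xhat → -E y + ε y ω < -E xhat + ε xhat ω}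
          * μ {ω | (Finset.univ.sup' Finset.univ_nonempty fun x : X => -E x + ε x ω) ∈ s} := by
  intro xhat s hs
  have hG : ∀ x, Measurable fun ω => -E x + ε x ω := fun x => (hmeas x).const_add _
  have hlaw : ∀ x, μ.map (fun ω => -E x + ε x ω) = gumbelMeasure (exp (-E x)) := fun x =>
    map_eq_gumbelMeasure (hG x) (exp_pos _) fun t => by
      have hset : (fun ω => -E x + ε x ω) ⁻¹' Iic t = {ω | ε x ω ≤ t + E x} := by
        ext ω
        simp only [mem_preimage, mem_Iic, mem_ofPred_eq]
        constructor <;> intro h <;> linarith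
      rw [hset, hgumbel, gumbelCDF_exp_neg]
  have hind : iIndepFun (fun x ω => -E x + ε x ω) μ :=
    hindep.comp _ fun x => measurable_const_add (-E x)
  exact hind.measure_argmax_inter_sup'_mem_eq_mul_of_gumbel hG (fun x => exp_pos _) hlaw xhat hs
end
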